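/- arXiv:2012.14387 — 7 statements merged into one kernel-verified Lean document; each statement's English description precedes it below -/
import Mathlib

section
/- For every real x ≥ 1, ψ(x) − ψ(x/2) ≤ Σ_{l ≤ x} Λ(l) · (⌊x/l⌋ − 2⌊x/(2l)⌋) ≤ ψ(x), where the sum is over positive integers l ≤ x. -/
/-!
The weight `⌊x/l⌋ - 2⌊x/(2l)⌋` is the parity of `⌊x/l⌋`, so it lies in `{0, 1}`; this gives the
upper bound since `Λ ≥ 0`. For `x/2 < l ≤ x` we have `⌊x/l⌋ = 1`, so the weight is `1` exactly on
the terms of `ψ(x) - ψ(x/2)`, which gives the lower bound.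
-/

/-- `ψ x = ∑_{n ≤ x} Λ(n)`, the Chebyshev function. -/
noncomputable def psi (x : ℝ) : ℝ := ∑ n ∈ Finset.Icc 1 ⌊x⌋₊, ArithmeticFunction.vonMangoldt n

open ArithmeticFunction Finset

section FloorRing

variable {k : Type*} [Field k] [LinearOrder k] [IsOrderedRing k] [FloorRing k]

theorem Int.floor_sub_two_mul_floor_div_two (u : k) : ⌊u⌋ - 2 * ⌊u / 2⌋ = ⌊u⌋ % 2 := by
  rw [show (2 : k) = ((2 : ℕ) : k) by norm_num, Int.floor_div_natCast]
  push_cast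
  omega

theorem floor_div_sub_two_mul_floor_div_two_mul (x : k) (l : ℕ) :
    (⌊x / l⌋ : k) - 2 * ⌊x / (2 * l)⌋ = ((⌊x / l⌋ % 2 : ℤ) : k) := by
  rw [div_mul_eq_div_div_swap, ← Int.floor_sub_two_mul_floor_div_two]
  push_cast
  rfl

theorem floor_div_eq_one_of_le_of_lt_two_mul {x l : k} (hlx : l ≤ x) (hxl : x < 2 * l) :
    ⌊x / l⌋ = 1 := by
  have hl : 0 < l := by linarith
  rw [Int.floor_eq_iff, le_div_iff₀ hl, div_lt_iff₀ hl]
  constructor <;> push_cast <;> linarith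

end FloorRing

section OrderedRing

variable {R : Type*} [Ring R] [LinearOrder R] [IsStrictOrderedRing R]

theorem Int.cast_emod_two_nonneg (m : ℤ) : (0 : R) ≤ ((m % 2 : ℤ) : R) := by
  exact_mod_cast Int.emod_nonneg m two_ne_zero

theorem Int.cast_emod_two_le_one (m : ℤ) : ((m % 2 : ℤ) : R) ≤ 1 := by
  have := Int.emod_two_eq_zero_or_one m
  exact_mod_cast (by omega : m % 2 ≤ 1)

end OrderedRing

theorem psi_sub_psi_half (x : ℝ) :
    psi x - psi (x / 2) = ∑ l ∈ (Icc 1 ⌊x⌋₊).filter (fun l : ℕ => x / 2 < l), vonMangoldt l := by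
  have hsmall : Icc 1 ⌊x / 2⌋₊ = (Icc 1 ⌊x⌋₊).filter (fun l : ℕ => ¬ x / 2 < l) := by
    ext l
    simp only [mem_Icc, mem_filter, not_lt]
    constructor
    · rintro ⟨hl, hlx⟩
      have hl' : (1 : ℝ) ≤ l := by exact_mod_cast hl
      rw [Nat.le_floor_iff' (by omega)] at hlx ⊢
      exact ⟨⟨hl, by linarith⟩, hlx⟩
    · rintro ⟨⟨hl, -⟩, hlx⟩
      exact ⟨hl, (Nat.le_floor_iff' (by omega)).2 hlx⟩
  rw [psi, psi, hsmall, ← sum_filter_add_sum_filter_not (Icc 1 ⌊x⌋₊) (fun l : ℕ => x / 2 < l)]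
  ring

theorem stmt_6_general (x : ℝ) :
    psi x - psi (x / 2) ≤
      (∑ l ∈ Finset.Icc 1 ⌊x⌋₊,
        ArithmeticFunction.vonMangoldt l * ((⌊x / l⌋ : ℝ) - 2 * (⌊x / (2 * l)⌋ : ℝ))) ∧
    (∑ l ∈ Finset.Icc 1 ⌊x⌋₊,
        ArithmeticFunction.vonMangoldt l * ((⌊x / l⌋ : ℝ) - 2 * (⌊x / (2 * l)⌋ : ℝ))) ≤ psi x := by
  simp_rw [floor_div_sub_two_mul_floor_div_two_mul]
  constructor
  · rw [psi_sub_psi_half, sum_filter]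
    gcongr with l hl
    split_ifs with hxl
    · have hlx : (l : ℝ) ≤ x := (Nat.le_floor_iff' (by grind)).1 (mem_Icc.1 hl).2
      rw [floor_div_eq_one_of_le_of_lt_two_mul hlx (by linarith)]
      simp
    · exact mul_nonneg vonMangoldt_nonneg (Int.cast_emod_two_nonneg _)
  · rw [psi]
    gcongr with l
    exact mul_le_of_le_one_right vonMangoldt_nonneg (Int.cast_emod_two_le_one _)

theorem stmt_6 (x : ℝ) (hx : 1 ≤ x) :
    psi x - psi (x / 2) ≤
      (∑ l ∈ Finset.Icc 1 ⌊x⌋₊,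
        ArithmeticFunction.vonMangoldt l * ((⌊x / l⌋ : ℝ) - 2 * (⌊x / (2 * l)⌋ : ℝ))) ∧
    (∑ l ∈ Finset.Icc 1 ⌊x⌋₊,
        ArithmeticFunction.vonMangoldt l * ((⌊x / l⌋ : ℝ) - 2 * (⌊x / (2 * l)⌋ : ℝ))) ≤ psi x :=
  stmt_6_general x
end

section
/- There is a constant C > 0 such that for every real x ≥ 2, |Σ_{l ≤ x} Λ(l) · (⌊x/l⌋ − 2⌊x/(2l)⌋) − x log 2| ≤ C · log x, where the sum is over positive integers l ≤ x. -/
/-!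
Since `Λ * ζ = log`, Chebyshev's identity `∑_{l ≤ x} Λ(l) ⌊x / l⌋ = log ⌊x⌋!` turns the
sum into `log ⌊x⌋! - 2 log ⌊x/2⌋!`. With `M = ⌊x/2⌋` and `⌊x⌋ ∈ {2M, 2M + 1}` this is
`log C(2M, M)` up to `log (2M + 1)`, and `4^M / (2M + 1) ≤ C(2M, M) ≤ 4^M` puts
`log C(2M, M)` within `log (2M + 1)` of `2M log 2`, itself within `2 log 2` of `x log 2`.
-/

open Finset Real
open scoped Nat ArithmeticFunction.vonMangoldt

theorem Real.log_factorial_eq_sum_log (n : ℕ) : log n ! = ∑ k ∈ Ioc 0 n, log k := by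
  rw [← prod_Ico_id_eq_factorial, ← Ico_add_one_add_one_eq_Ioc, Nat.cast_prod,
    log_prod fun k hk => Nat.cast_ne_zero.2 (by simp only [mem_Ico] at hk; omega)]
  rfl

theorem sum_Ioc_vonMangoldt_mul_div_eq_log_factorial (n : ℕ) :
    ∑ l ∈ Ioc 0 n, Λ l * ((n / l : ℕ) : ℝ) = log n ! := by
  rw [← ArithmeticFunction.sum_Ioc_mul_zeta_eq_sum, ArithmeticFunction.vonMangoldt_mul_zeta,
    Real.log_factorial_eq_sum_log]
  simp only [ArithmeticFunction.log_apply]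

theorem sum_Icc_vonMangoldt_mul_floor_div_eq_log_factorial {x : ℝ} (hx : 0 ≤ x) {N : ℕ}
    (hN : ⌊x⌋₊ ≤ N) : ∑ l ∈ Icc 1 N, Λ l * (⌊x / l⌋ : ℝ) = log ⌊x⌋₊ ! := by
  have hfloor (l : ℕ) : (⌊x / l⌋ : ℝ) = ((⌊x⌋₊ / l : ℕ) : ℝ) := by
    rw [← natCast_floor_eq_intCast_floor (by positivity), Nat.floor_div_natCast]
  simp only [hfloor]
  rw [← sum_Ioc_vonMangoldt_mul_div_eq_log_factorial, ← Icc_add_one_left_eq_Ioc]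
  refine (sum_subset (Icc_subset_Icc_right hN) fun l hl hl' => ?_).symm
  simp only [mem_Icc, not_and, not_le] at hl hl'
  simp [Nat.div_eq_of_lt (hl' hl.1)]

theorem log_factorial_two_mul (n : ℕ) :
    log (2 * n)! = log n.centralBinom + 2 * log n ! := by
  have h := Nat.choose_mul_factorial_mul_factorial (show n ≤ 2 * n by omega)
  rw [show 2 * n - n = n by omega, ← Nat.centralBinom_eq_two_mul_choose] at h
  rw [← h]
  push_cast
  have hC : (n.centralBinom : ℝ) ≠ 0 := by exact_mod_cast n.centralBinom_ne_zero
  rw [log_mul (by positivity) (by positivity), log_mul hC (by positivity)]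
  ring

theorem log_centralBinom_le (n : ℕ) : log n.centralBinom ≤ 2 * n * log 2 := by
  calc log n.centralBinom ≤ log ((4 : ℝ) ^ n) :=
        log_le_log (by exact_mod_cast n.centralBinom_pos)
          (by exact_mod_cast n.centralBinom_le_four_pow)
    _ = 2 * n * log 2 := by
        rw [log_pow, show (4 : ℝ) = 2 ^ 2 by norm_num, log_pow]; push_cast; ring

theorem mul_log_two_le_log_centralBinom_add (n : ℕ) :
    2 * n * log 2 ≤ log n.centralBinom + log (2 * n + 1) := by
  calc 2 * n * log 2 = log ((4 : ℝ) ^ n) := by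
        rw [log_pow, show (4 : ℝ) = 2 ^ 2 by norm_num, log_pow]; push_cast; ring
    _ ≤ log ((2 * n + 1) * n.centralBinom) :=
        log_le_log (by positivity)
          (by exact_mod_cast n.four_pow_le_two_mul_add_one_mul_central_binom)
    _ = log n.centralBinom + log (2 * n + 1) := by
        rw [log_mul (by positivity) (by exact_mod_cast n.centralBinom_ne_zero), add_comm]

theorem abs_log_factorial_floor_sub_two_mul_log_factorial_floor_half_le {x : ℝ} (hx : 0 ≤ x) :
    |log ⌊x⌋₊ ! - 2 * log ⌊x / 2⌋₊ ! - x * log 2| ≤ log (x + 1) + 2 * log 2 := by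
  set M := ⌊x / 2⌋₊
  have hNM : 2 * M ≤ ⌊x⌋₊ ∧ ⌊x⌋₊ ≤ 2 * M + 1 := by
    have := Nat.floor_div_natCast x 2
    push_cast at this
    omega
  have hxM : 2 * (M : ℝ) ≤ x ∧ x ≤ 2 * M + 2 := by
    constructor <;>
      linarith [Nat.floor_le (show 0 ≤ x / 2 by positivity), Nat.lt_floor_add_one (x / 2)]
  have hxM_log : 2 * M * log 2 ≤ x * log 2 ∧ x * log 2 ≤ (2 * M + 2) * log 2 := by
    have hlog2 := (log_pos one_lt_two).le
    exact ⟨by gcongr; exact hxM.1, by gcongr; exact hxM.2⟩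
  have hfact_lower : log (2 * M)! ≤ log ⌊x⌋₊ ! :=
    log_le_log (by positivity) (by exact_mod_cast Nat.factorial_le hNM.1)
  have hfact_upper : log ⌊x⌋₊ ! ≤ log (2 * M + 1) + log (2 * M)! := by
    rw [← log_mul (by positivity) (by positivity)]
    refine log_le_log (by positivity) ?_
    exact_mod_cast (Nat.factorial_le hNM.2).trans_eq (Nat.factorial_succ _)
  have hlog : log (2 * M + 1) ≤ log (x + 1) := log_le_log (by positivity) (by linarith)
  have hsplit := log_factorial_two_mul M
  have hupper := log_centralBinom_le M
  have hlower := mul_log_two_le_log_centralBinom_add M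
  rw [abs_le]
  constructor <;> linarith

theorem log_add_one_le_two_mul_log {x : ℝ} (hx : 2 ≤ x) : log (x + 1) ≤ 2 * log x := by
  calc log (x + 1) ≤ log (x ^ 2) := log_le_log (by linarith) (by nlinarith)
    _ = 2 * log x := by rw [log_pow]; norm_num

theorem stmt_7 :
    ∃ C : ℝ, 0 < C ∧ ∀ x : ℝ, 2 ≤ x →
      |(∑ l ∈ Finset.Icc 1 ⌊x⌋₊,
          ArithmeticFunction.vonMangoldt l * ((⌊x / l⌋ : ℝ) - 2 * (⌊x / (2 * l)⌋ : ℝ))) -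
        x * Real.log 2| ≤ C * Real.log x := by
  refine ⟨4, by norm_num, fun x hx => ?_⟩
  have hx0 : 0 ≤ x := by linarith
  have hsum : ∑ l ∈ Icc 1 ⌊x⌋₊, Λ l * ((⌊x / l⌋ : ℝ) - 2 * (⌊x / (2 * l)⌋ : ℝ)) =
      log ⌊x⌋₊ ! - 2 * log ⌊x / 2⌋₊ ! := by
    simp only [mul_sub, sum_sub_distrib, mul_left_comm _ (2 : ℝ), ← mul_sum, ← div_div]
    rw [sum_Icc_vonMangoldt_mul_floor_div_eq_log_factorial hx0 le_rfl,
      sum_Icc_vonMangoldt_mul_floor_div_eq_log_factorial (by positivity)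
        (Nat.floor_le_floor (by linarith))]
  have hlog2 : log 2 ≤ log x := log_le_log two_pos hx
  calc _ ≤ log (x + 1) + 2 * log 2 := by
        rw [hsum]; exact abs_log_factorial_floor_sub_two_mul_log_factorial_floor_half_le hx0
    _ ≤ 4 * log x := by linarith [log_add_one_le_two_mul_log hx]
end

section
/- There is a constant C > 0 such that for every real x ≥ 2, ψ(x) ≥ x log 2 − C · log x. -/
open Real

theorem psi_eq_chebyshevPsi (x : ℝ) : psi x = Chebyshev.psi x := rfl

theorem log_add_two_le_two_mul_log {x : ℝ} (hx : 2 ≤ x) : log (x + 2) ≤ 2 * log x :=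
  calc log (x + 2) ≤ log (x ^ 2) := log_le_log (by linarith) (by nlinarith)
    _ = 2 * log x := by rw [log_pow, Nat.cast_ofNat]

theorem stmt_8 :
    ∃ C : ℝ, 0 < C ∧ ∀ x : ℝ, 2 ≤ x → x * Real.log 2 - C * Real.log x ≤ psi x := by
  refine ⟨3, by norm_num, fun x hx => ?_⟩
  have hchebyshev := Chebyshev.psi_ge' (x := x) (by linarith)
  have hlog_two : log 2 ≤ log x := log_le_log two_pos hx
  have hlog_add_two := log_add_two_le_two_mul_log hx
  rw [psi_eq_chebyshevPsi]
  linarith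
end

section
/- There is a constant C > 0 such that for every real x ≥ 2, ψ(x) ≤ (2 log 2) · x + C · (log x)². -/
open Finset ArithmeticFunction
open scoped Chebyshev

namespace Nat

theorem log_two_mul_le_log_add_factorization_centralBinom {p : ℕ} (hp : p.Prime) (n : ℕ) :
    log p (2 * n) ≤ log p n + (centralBinom n).factorization p := by
  rcases n.eq_zero_or_pos with rfl | hn
  · simp
  rcases le_or_gt (log p (2 * n)) (log p n) with h | h
  · omega
  have hlog_le_succ : log p (2 * n) ≤ log p n + 1 := by
    rw [← log_mul_base hp.one_lt hn.ne']
    exact log_mono_right (by nlinarith [hp.two_le])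
  suffices 1 ≤ (centralBinom n).factorization p by omega
  set k := log p (2 * n)
  have hn_lt : n < p ^ k := lt_pow_of_log_lt hp.one_lt h
  have hle_two_mul : p ^ k ≤ 2 * n := pow_log_le_self p (by omega)
  rw [centralBinom_eq_two_mul_choose, factorization_choose hp (by omega) (lt_succ_self _),
    one_le_card]
  refine ⟨k, mem_filter.mpr ⟨mem_Ico.mpr ⟨by omega, by omega⟩, ?_⟩⟩
  rw [show 2 * n - n = n by omega, mod_eq_of_lt hn_lt]
  omega

theorem lcmUpto_two_mul_dvd (n : ℕ) : lcmUpto (2 * n) ∣ lcmUpto n * centralBinom n := by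
  have hne : lcmUpto n * centralBinom n ≠ 0 :=
    mul_ne_zero (lcmUpto_ne_zero n) (centralBinom_ne_zero n)
  refine (factorization_prime_le_iff_dvd (lcmUpto_ne_zero _) hne).mp fun p hp => ?_
  rw [factorization_mul (lcmUpto_ne_zero n) (centralBinom_ne_zero n), Finsupp.add_apply,
    factorization_lcmUpto _ hp, factorization_lcmUpto _ hp]
  exact log_two_mul_le_log_add_factorization_centralBinom hp n

end Nat

namespace Chebyshev

theorem psi_two_mul_le (n : ℕ) : ψ (2 * n) ≤ ψ n + 2 * Real.log 2 * n := by
  have hle : Nat.lcmUpto (2 * n) ≤ Nat.lcmUpto n * Nat.centralBinom n :=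
    Nat.le_of_dvd (Nat.mul_pos (Nat.lcmUpto_pos n) (Nat.centralBinom_pos n))
      (Nat.lcmUpto_two_mul_dvd n)
  have hcentral : (Nat.centralBinom n : ℝ) ≤ 2 ^ (2 * n) := by
    rw [pow_mul]; exact_mod_cast (Nat.centralBinom_le_four_pow n).trans_eq (by norm_num)
  have hlcm_pos : (0 : ℝ) < Nat.lcmUpto n := mod_cast Nat.lcmUpto_pos n
  have hcentral_pos : (0 : ℝ) < Nat.centralBinom n := mod_cast Nat.centralBinom_pos n
  calc ψ (2 * n) = Real.log (Nat.lcmUpto (2 * n)) := by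
        rw [← psi_eq_log_lcmUpto]; push_cast; rfl
    _ ≤ Real.log (Nat.lcmUpto n * Nat.centralBinom n) := by
        gcongr
        · exact_mod_cast Nat.lcmUpto_pos _
        · exact_mod_cast hle
    _ = ψ n + Real.log (Nat.centralBinom n) := by
        rw [Real.log_mul hlcm_pos.ne' hcentral_pos.ne', psi_eq_log_lcmUpto]
    _ ≤ ψ n + Real.log (2 ^ (2 * n)) := by gcongr
    _ = ψ n + 2 * Real.log 2 * n := by rw [Real.log_pow]; push_cast; ring

theorem psi_natCast_add_one (n : ℕ) : ψ (n + 1 : ℕ) = ψ n + Λ (n + 1) := by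
  simp only [psi, Nat.floor_natCast]
  exact sum_Ioc_succ_top (Nat.zero_le n) _

theorem psi_sub_two_mul_log_two_le (m : ℕ) :
    ψ m - 2 * Real.log 2 * m ≤ ψ (m / 2 : ℕ) - 2 * Real.log 2 * (m / 2 : ℕ) + Real.log m := by
  have hlog_two : 0 ≤ Real.log 2 := Real.log_nonneg one_le_two
  obtain ⟨n, rfl | rfl⟩ := Nat.even_or_odd' m
  · have hlog : 0 ≤ Real.log (2 * n : ℕ) := Real.log_natCast_nonneg _
    rw [Nat.mul_div_cancel_left n two_pos]
    push_cast at hlog ⊢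
    linarith [psi_two_mul_le n]
  · rw [psi_natCast_add_one, show (2 * n + 1) / 2 = n by omega]
    have := vonMangoldt_le_log (n := 2 * n + 1)
    push_cast at this ⊢
    linarith [psi_two_mul_le n]

end Chebyshev

/-- The constant `3` works because `3 log 2 > 1`. -/
theorem le_three_mul_log_sq_of_le_half_add_log {f : ℕ → ℝ} (h1 : f 1 ≤ 0)
    (hrec : ∀ m, 2 ≤ m → f m ≤ f (m / 2) + Real.log m) :
    ∀ m, 1 ≤ m → f m ≤ 3 * Real.log m ^ 2 := by
  intro m
  induction m using Nat.strong_induction_on with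
  | _ m ih =>
  intro hm
  rcases hm.eq_or_lt with rfl | hm
  · simpa using h1
  have hn : 1 ≤ m / 2 := by omega
  have hlog_half : Real.log (m / 2 : ℕ) ≤ Real.log m - Real.log 2 := by
    rw [← Real.log_div (by positivity) two_ne_zero]
    exact Real.log_le_log (by exact_mod_cast hn) Nat.cast_div_le
  have hlog_half_nonneg : 0 ≤ Real.log (m / 2 : ℕ) := Real.log_natCast_nonneg _
  have hlog_two_le : Real.log 2 ≤ Real.log m := Real.log_le_log two_pos (mod_cast hm)
  have hlog_two := Real.log_two_gt_d9
  calc f m ≤ f (m / 2) + Real.log m := hrec m hm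
    _ ≤ 3 * Real.log (m / 2 : ℕ) ^ 2 + Real.log m := by
        gcongr; exact ih _ (by omega) hn
    _ ≤ 3 * (Real.log m - Real.log 2) ^ 2 + Real.log m := by gcongr
    _ ≤ 3 * Real.log m ^ 2 := by nlinarith

theorem psi_eq_chebyshev_psi (x : ℝ) : psi x = ψ x := by
  rw [psi, Chebyshev.psi, ← Finset.Icc_add_one_left_eq_Ioc, zero_add]

theorem stmt_9 :
    ∃ C : ℝ, 0 < C ∧ ∀ x : ℝ, 2 ≤ x →
      psi x ≤ (2 * Real.log 2) * x + C * (Real.log x) ^ 2 := by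
  refine ⟨3, by norm_num, fun x hx => ?_⟩
  have hfloor : 1 ≤ ⌊x⌋₊ := Nat.le_floor (by push_cast; linarith)
  have hfloor_le : (⌊x⌋₊ : ℝ) ≤ x := Nat.floor_le (by linarith)
  have hbound := le_three_mul_log_sq_of_le_half_add_log (f := fun m => ψ m - 2 * Real.log 2 * m)
    (by simp [Real.log_nonneg one_le_two]) (fun m _ => Chebyshev.psi_sub_two_mul_log_two_le m)
    _ hfloor
  have hlog_le : Real.log ⌊x⌋₊ ≤ Real.log x := Real.log_le_log (by positivity) hfloor_le
  have hlog_nonneg : 0 ≤ Real.log ⌊x⌋₊ := Real.log_natCast_nonneg _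
  rw [psi_eq_chebyshev_psi, Chebyshev.psi_eq_psi_coe_floor]
  calc ψ ⌊x⌋₊ ≤ 2 * Real.log 2 * ⌊x⌋₊ + 3 * Real.log ⌊x⌋₊ ^ 2 := by linarith
    _ ≤ (2 * Real.log 2) * x + 3 * Real.log x ^ 2 := by gcongr
end

section
/- For every real x ≥ 2, π(x) ≤ Σ_{2 ≤ n ≤ x} Λ(n)/log n, and Σ_{2 ≤ n ≤ x} Λ(n)/log n = ψ(x)/log x + ∫_2^x ψ(t)/(t (log t)²) dt. -/
/-- `π x`, the number of primes `≤ x`. -/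
noncomputable def primePi (x : ℝ) : ℕ := ((Finset.Icc 1 ⌊x⌋₊).filter Nat.Prime).card

open Finset ArithmeticFunction

lemma vonMangoldt_div_log_of_prime {p : ℕ} (hp : p.Prime) : Λ p / Real.log p = 1 := by
  rw [vonMangoldt_apply_prime hp]
  exact div_self (Real.log_pos (by exact_mod_cast hp.one_lt)).ne'

lemma primePi_le_sum_vonMangoldt_div_log (x : ℝ) :
    (primePi x : ℝ) ≤ ∑ n ∈ Icc 2 ⌊x⌋₊, Λ n / Real.log n :=
  calc (primePi x : ℝ) = ∑ p ∈ (Icc 1 ⌊x⌋₊).filter Nat.Prime, Λ p / Real.log p := by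
        rw [primePi, card_eq_sum_ones, Nat.cast_sum, Nat.cast_one]
        exact sum_congr rfl fun p hp => (vonMangoldt_div_log_of_prime (mem_filter.1 hp).2).symm
    _ ≤ ∑ n ∈ Icc 2 ⌊x⌋₊, Λ n / Real.log n := by
        refine sum_le_sum_of_subset_of_nonneg (fun p hp => ?_)
          fun n _ _ => div_nonneg vonMangoldt_nonneg (Real.log_natCast_nonneg n)
        obtain ⟨hp, hprime⟩ := mem_filter.1 hp
        exact mem_Icc.2 ⟨hprime.two_le, (mem_Icc.1 hp).2⟩

lemma psi_eq_sum_Icc_zero (x : ℝ) : psi x = ∑ n ∈ Icc 0 ⌊x⌋₊, Λ n := by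
  rw [psi, ← Chebyshev.psi_eq_sum_Icc, Chebyshev.psi, ← Icc_add_one_left_eq_Ioc, zero_add]

lemma psi_two : psi 2 = Real.log 2 := by
  rw [psi, Nat.floor_ofNat, show Icc 1 2 = {1, 2} from rfl, sum_pair (by norm_num),
    vonMangoldt_apply_one, vonMangoldt_apply_prime Nat.prime_two, zero_add, Nat.cast_ofNat]

lemma hasDerivAt_inv_log {t : ℝ} (ht : 1 < t) :
    HasDerivAt (fun t => (Real.log t)⁻¹) (-(t * Real.log t ^ 2)⁻¹) t := by
  refine ((Real.hasDerivAt_log (by positivity)).inv (Real.log_pos ht).ne').congr_deriv ?_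
  rw [mul_inv, neg_div, div_eq_mul_inv]

lemma integrableOn_deriv_inv_log {a b : ℝ} (ha : 1 < a) :
    MeasureTheory.IntegrableOn (deriv fun t => (Real.log t)⁻¹) (Set.Icc a b) := by
  have hcont : ContinuousOn (fun t => -(t * Real.log t ^ 2)⁻¹) (Set.Icc a b) := by
    refine (ContinuousOn.inv₀ ?_ fun t ht => ?_).neg
    · exact continuousOn_id.mul ((Real.continuousOn_log.mono fun t ht =>
        (zero_lt_one.trans (ha.trans_le ht.1)).ne').pow 2)
    · have ht1 := ha.trans_le ht.1
      exact mul_ne_zero (by linarith) (pow_ne_zero 2 (Real.log_pos ht1).ne')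
  exact hcont.integrableOn_Icc.congr_fun
    (fun t ht => ((hasDerivAt_inv_log (ha.trans_le ht.1)).deriv).symm) measurableSet_Icc

lemma sum_Ioc_vonMangoldt_div_log_eq {x : ℝ} (hx : 2 ≤ x) :
    ∑ n ∈ Ioc 2 ⌊x⌋₊, Λ n / Real.log n =
      psi x / Real.log x - 1 + ∫ t in (2:ℝ)..x, psi t / (t * Real.log t ^ 2) := by
  have habel := sum_mul_eq_sub_sub_integral_mul (fun n => Λ n) zero_le_two hx
    (fun t ht => (hasDerivAt_inv_log (one_lt_two.trans_le ht.1)).differentiableAt)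
    (integrableOn_deriv_inv_log one_lt_two)
  have hintegrand : ∀ t ∈ Set.Ioc (2:ℝ) x,
      deriv (fun t => (Real.log t)⁻¹) t * psi t = -(psi t / (t * Real.log t ^ 2)) := fun t ht => by
    rw [(hasDerivAt_inv_log (one_lt_two.trans ht.1)).deriv, div_eq_mul_inv]
    ring
  simp only [← psi_eq_sum_Icc_zero, ← div_eq_inv_mul] at habel
  rw [Nat.floor_ofNat] at habel
  rw [habel, psi_two, div_self (Real.log_pos one_lt_two).ne',
    MeasureTheory.setIntegral_congr_fun measurableSet_Ioc hintegrand, MeasureTheory.integral_neg,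
    ← intervalIntegral.integral_of_le hx, sub_neg_eq_add]

lemma sum_Icc_vonMangoldt_div_log_eq {x : ℝ} (hx : 2 ≤ x) :
    ∑ n ∈ Icc 2 ⌊x⌋₊, Λ n / Real.log n =
      psi x / Real.log x + ∫ t in (2:ℝ)..x, psi t / (t * Real.log t ^ 2) := by
  rw [Icc_eq_cons_Ioc (Nat.le_floor (by exact_mod_cast hx)), sum_cons,
    vonMangoldt_div_log_of_prime Nat.prime_two, sum_Ioc_vonMangoldt_div_log_eq hx]
  ring

theorem stmt_13 (x : ℝ) (hx : 2 ≤ x) :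
    (primePi x : ℝ) ≤
      (∑ n ∈ Finset.Icc 2 ⌊x⌋₊, ArithmeticFunction.vonMangoldt n / Real.log n) ∧
    (∑ n ∈ Finset.Icc 2 ⌊x⌋₊, ArithmeticFunction.vonMangoldt n / Real.log n) =
      psi x / Real.log x + ∫ t in (2:ℝ)..x, psi t / (t * (Real.log t) ^ 2) :=
  ⟨primePi_le_sum_vonMangoldt_div_log x, sum_Icc_vonMangoldt_div_log_eq hx⟩
end

section
/- For every real s > 0, s · ∫_1^∞ u^{−s−1} · (∫_1^u (Σ_{i ≤ t} μ(i)/i) dt/t) du = 1/(s · ζ(s+1)), where the inner sum is over positive integers i ≤ t and ζ denotes the Riemann zeta function. -/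
/-!
By Abel summation, the inner integral is `∑_{n ≤ u} μ(n)/n · log (u/n)`. Since
`∫_n^∞ u^(-s-1) log (u/n) du = n^(-s)/s²` and `∑ |μ(n)|/n · n^(-s)` converges, the outer integral
may be taken term by term, giving `s⁻² ∑ μ(n) n^(-s-1) = s⁻² ζ(s+1)⁻¹`.
-/

open MeasureTheory Real Set Filter Topology

lemma Finset.sum_Icc_zero_eq_sum_Icc_one {M : Type*} [AddCommMonoid M] {g : ℕ → M}
    (hg : g 0 = 0) (n : ℕ) : ∑ k ∈ Finset.Icc 0 n, g k = ∑ k ∈ Finset.Icc 1 n, g k := by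
  rw [Finset.Icc_eq_cons_Ioc (Nat.zero_le n), Finset.sum_cons, hg, zero_add,
    ← Finset.Icc_add_one_left_eq_Ioc, zero_add]

lemma integral_sum_Icc_floor_div_eq_sum_mul_log {c : ℕ → ℝ} (hc : c 0 = 0) {u : ℝ}
    (hu : 1 ≤ u) :
    ∫ t in (1:ℝ)..u, (∑ i ∈ Finset.Icc 1 ⌊t⌋₊, c i) / t =
      ∑ i ∈ Finset.Icc 1 ⌊u⌋₊, c i * log (u / i) := by
  have hpos : ∀ t ∈ Icc 1 u, t ≠ 0 := fun t ht => (zero_lt_one.trans_le ht.1).ne'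
  have abel := sum_mul_eq_sub_integral_mul₀ c hc u (f := log)
    (fun t ht => differentiableAt_log (hpos t ht))
    (by rw [deriv_log']; exact (continuousOn_inv₀.mono hpos).integrableOn_Icc)
  simp only [Finset.sum_Icc_zero_eq_sum_Icc_one hc, deriv_log',
    Finset.sum_Icc_zero_eq_sum_Icc_one (g := fun k => log k * c k) (by simp [hc])] at abel
  calc ∫ t in (1:ℝ)..u, (∑ i ∈ Finset.Icc 1 ⌊t⌋₊, c i) / t
      = ∫ t in Ioc 1 u, t⁻¹ * ∑ k ∈ Finset.Icc 1 ⌊t⌋₊, c k := by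
        simp_rw [intervalIntegral.integral_of_le hu, div_eq_inv_mul]
    _ = ∑ i ∈ Finset.Icc 1 ⌊u⌋₊, (c i * log u - log i * c i) := by
        rw [Finset.sum_sub_distrib, ← Finset.sum_mul, abel]
        ring
    _ = ∑ i ∈ Finset.Icc 1 ⌊u⌋₊, c i * log (u / i) := by
        refine Finset.sum_congr rfl fun i hi => ?_
        have hi : (i : ℝ) ≠ 0 :=
          Nat.cast_ne_zero.2 (Nat.one_le_iff_ne_zero.1 (Finset.mem_Icc.1 hi).1)
        rw [log_div (hpos u ⟨hu, le_rfl⟩) hi]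
        ring

section RpowLogKernel

variable {s c : ℝ}

lemma hasDerivAt_rpow_mul_log_div_primitive (hs : s ≠ 0) (hc : c ≠ 0) {u : ℝ} (hu : 0 < u) :
    HasDerivAt (fun u => -(u ^ (-s) * log (u / c)) / s - u ^ (-s) / s ^ 2)
      (u ^ (-s - 1) * log (u / c)) u := by
  have hpow : HasDerivAt (fun u => u ^ (-s)) (-s * u ^ (-s - 1)) u := by
    simpa using hasDerivAt_rpow_const (p := -s) (Or.inl hu.ne')
  have hlog : HasDerivAt (fun u => log (u / c)) u⁻¹ u := by
    convert ((hasDerivAt_id' u).div_const c).log (div_ne_zero hu.ne' hc) using 1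
    field_simp
  refine (((hpow.mul hlog).neg.div_const s).sub (hpow.div_const (s ^ 2))).congr_deriv ?_
  rw [show u ^ (-s - 1) = u ^ (-s) * u⁻¹ by rw [rpow_sub hu, rpow_one, div_eq_mul_inv]]
  field_simp
  ring

lemma tendsto_rpow_mul_log_div_primitive (hs : 0 < s) (hc : c ≠ 0) :
    Tendsto (fun u => -(u ^ (-s) * log (u / c)) / s - u ^ (-s) / s ^ 2) atTop (𝓝 0) := by
  have hpow : Tendsto (fun u : ℝ => u ^ (-s)) atTop (𝓝 0) := tendsto_rpow_neg_atTop hs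
  have hlog : Tendsto (fun u => log u / u ^ s) atTop (𝓝 0) :=
    (isLittleO_log_rpow_atTop hs).tendsto_div_nhds_zero
  have := ((hlog.sub (hpow.const_mul (log c))).neg.div_const s).sub (hpow.div_const (s ^ 2))
  simp only [mul_zero, sub_zero, neg_zero, zero_div] at this
  refine this.congr' ?_
  filter_upwards [eventually_gt_atTop 0] with u hu
  rw [log_div hu.ne' hc, rpow_neg hu.le]
  ring

lemma integrableOn_Ioi_rpow_mul_log_div (hs : 0 < s) (hc : 0 < c) :
    IntegrableOn (fun u => u ^ (-s - 1) * log (u / c)) (Ioi c) := by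
  refine integrableOn_Ioi_deriv_of_nonneg'
    (fun u hu => hasDerivAt_rpow_mul_log_div_primitive hs.ne' hc.ne' (hc.trans_le hu))
    (fun u hu => ?_) (tendsto_rpow_mul_log_div_primitive hs hc.ne')
  exact mul_nonneg (rpow_nonneg (hc.trans hu).le _) (log_nonneg ((one_le_div hc).2 hu.out.le))

lemma integral_Ioi_rpow_mul_log_div (hs : 0 < s) (hc : 0 < c) :
    ∫ u in Ioi c, u ^ (-s - 1) * log (u / c) = c ^ (-s) / s ^ 2 := by
  rw [integral_Ioi_of_hasDerivAt_of_tendsto'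
    (fun u hu => hasDerivAt_rpow_mul_log_div_primitive hs.ne' hc.ne' (hc.trans_le hu))
    (integrableOn_Ioi_rpow_mul_log_div hs hc) (tendsto_rpow_mul_log_div_primitive hs hc.ne'),
    div_self hc.ne', log_one]
  ring

lemma indicator_Ioi_rpow_mul_log_div_of_le {u : ℝ} (hcu : c ≤ u) :
    (Ioi c).indicator (fun u => u ^ (-s - 1) * log (u / c)) u = u ^ (-s - 1) * log (u / c) := by
  rcases hcu.lt_or_eq with h | rfl
  · exact indicator_of_mem h _
  · simp

lemma indicator_Ioi_rpow_mul_log_div_nonneg (hc : 0 < c) (u : ℝ) :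
    0 ≤ (Ioi c).indicator (fun u => u ^ (-s - 1) * log (u / c)) u :=
  indicator_nonneg (fun _ hu => mul_nonneg (rpow_nonneg (hc.trans hu).le _)
    (log_nonneg ((one_le_div hc).2 (le_of_lt hu)))) u

lemma integrable_indicator_Ioi_rpow_mul_log_div (hs : 0 < s) (hc : 1 ≤ c) :
    Integrable ((Ioi c).indicator fun u => u ^ (-s - 1) * log (u / c))
      (volume.restrict (Ioi 1)) := by
  rw [integrable_indicator_iff measurableSet_Ioi, IntegrableOn,
    Measure.restrict_restrict measurableSet_Ioi, Ioi_inter_Ioi, sup_eq_left.2 hc]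
  exact integrableOn_Ioi_rpow_mul_log_div hs (zero_lt_one.trans_le hc)

lemma integral_indicator_Ioi_rpow_mul_log_div (hs : 0 < s) (hc : 1 ≤ c) :
    ∫ u in Ioi 1, (Ioi c).indicator (fun u => u ^ (-s - 1) * log (u / c)) u =
      c ^ (-s) / s ^ 2 := by
  rw [integral_indicator measurableSet_Ioi, Measure.restrict_restrict measurableSet_Ioi,
    Ioi_inter_Ioi, sup_eq_left.2 hc]
  exact integral_Ioi_rpow_mul_log_div hs (zero_lt_one.trans_le hc)

end RpowLogKernel

theorem integral_Ioi_rpow_mul_integral_sum_floor_div {c : ℕ → ℝ} (hc : c 0 = 0) {s : ℝ}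
    (hs : 0 < s) (hsum : Summable fun n : ℕ => |c n| * (n : ℝ) ^ (-s)) :
    ∫ u in Ioi (1:ℝ), u ^ (-s - 1) * ∫ t in (1:ℝ)..u, (∑ i ∈ Finset.Icc 1 ⌊t⌋₊, c i) / t =
      (∑' n : ℕ, c n * (n : ℝ) ^ (-s)) / s ^ 2 := by
  set K : ℕ → ℝ → ℝ := fun n => (Ioi (n : ℝ)).indicator fun u => u ^ (-s - 1) * log (u / n)
  have hK_int (n : ℕ) : Integrable (fun u => c n * K n u) (volume.restrict (Ioi 1)) := by
    rcases eq_or_ne n 0 with rfl | hn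
    · simp [hc]
    · exact (integrable_indicator_Ioi_rpow_mul_log_div hs
        (Nat.one_le_cast_iff_ne_zero.2 hn)).const_mul _
  have hK_integral (n : ℕ) : ∫ u in Ioi 1, c n * K n u = c n * (n : ℝ) ^ (-s) / s ^ 2 := by
    rcases eq_or_ne n 0 with rfl | hn
    · simp [hc]
    · rw [integral_const_mul, integral_indicator_Ioi_rpow_mul_log_div hs
        (Nat.one_le_cast_iff_ne_zero.2 hn), mul_div_assoc]
  have hK_norm (n : ℕ) : ∫ u in Ioi 1, ‖c n * K n u‖ = |c n| * (n : ℝ) ^ (-s) / s ^ 2 := by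
    rcases eq_or_ne n 0 with rfl | hn
    · simp [hc]
    · have hn1 : (1 : ℝ) ≤ n := Nat.one_le_cast_iff_ne_zero.2 hn
      simp_rw [K, norm_mul, Real.norm_eq_abs, abs_of_nonneg
        (indicator_Ioi_rpow_mul_log_div_nonneg (zero_lt_one.trans_le hn1) _)]
      rw [integral_const_mul, integral_indicator_Ioi_rpow_mul_log_div hs hn1, mul_div_assoc]
  have hK_sum : ∀ u ∈ Ioi (1 : ℝ),
      u ^ (-s - 1) * ∫ t in (1:ℝ)..u, (∑ i ∈ Finset.Icc 1 ⌊t⌋₊, c i) / t =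
        ∑' n, c n * K n u := by
    intro u hu
    have hu0 : 0 ≤ u := zero_le_one.trans hu.out.le
    rw [integral_sum_Icc_floor_div_eq_sum_mul_log hc hu.out.le, Finset.mul_sum, tsum_eq_sum]
    · refine Finset.sum_congr rfl fun n hn => ?_
      simp only [K]
      rw [indicator_Ioi_rpow_mul_log_div_of_le
        ((Nat.le_floor_iff hu0).1 (Finset.mem_Icc.1 hn).2)]
      ring
    · intro n hn
      rcases eq_or_ne n 0 with rfl | hn0
      · simp [hc]
      · have : u ∉ Ioi (n : ℝ) := fun h => hn (Finset.mem_Icc.2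
          ⟨Nat.one_le_iff_ne_zero.2 hn0, Nat.le_floor h.out.le⟩)
        simp [K, indicator_of_notMem this]
  rw [setIntegral_congr_fun measurableSet_Ioi hK_sum, ← integral_tsum_of_summable_integral_norm
    hK_int (by simpa only [hK_norm] using hsum.div_const (s ^ 2)), tsum_congr hK_integral,
    tsum_div_const]

section Moebius

open ArithmeticFunction
open scoped ArithmeticFunction.Moebius LSeries.notation

variable {s : ℝ}

lemma ofReal_moebius_div_mul_rpow_neg (n : ℕ) :
    (((μ n : ℝ) / n * (n : ℝ) ^ (-s) : ℝ) : ℂ) = LSeries.term ↗μ (s + 1) n := by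
  rcases eq_or_ne n 0 with rfl | hn
  · simp
  have hn0 : (0 : ℝ) < n := by positivity
  have : (μ n : ℝ) / n * (n : ℝ) ^ (-s) = μ n / (n : ℝ) ^ (s + 1) := by
    rw [rpow_add_one hn0.ne', rpow_neg hn0.le]
    field_simp
  rw [LSeries.term_of_ne_zero hn, this, Complex.ofReal_div, Complex.ofReal_cpow n.cast_nonneg]
  push_cast
  rfl

lemma summable_abs_moebius_div_mul_rpow_neg (hs : 0 < s) :
    Summable fun n : ℕ => |(μ n : ℝ) / n| * (n : ℝ) ^ (-s) := by
  have h := (LSeriesSummable_moebius_iff.2 (by simpa using hs : 1 < ((s : ℂ) + 1).re)).norm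
  refine h.congr fun n => ?_
  rw [← ofReal_moebius_div_mul_rpow_neg, Complex.norm_real, Real.norm_eq_abs, abs_mul,
    abs_of_nonneg (rpow_nonneg n.cast_nonneg _)]

lemma ofReal_tsum_moebius_div_mul_rpow_neg (hs : 0 < s) :
    ((∑' n : ℕ, (μ n : ℝ) / n * (n : ℝ) ^ (-s) : ℝ) : ℂ) = (riemannZeta (s + 1))⁻¹ := by
  have hs' : 1 < ((s : ℂ) + 1).re := by simpa using hs
  have h := LSeries_zeta_mul_Lseries_moebius hs'
  rw [LSeries_zeta_eq_riemannZeta hs'] at h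
  rw [Complex.ofReal_tsum, tsum_congr ofReal_moebius_div_mul_rpow_neg, ← LSeries,
    eq_inv_of_mul_eq_one_right h]

end Moebius

theorem stmt_15 (s : ℝ) (hs : 0 < s) :
    (s : ℂ) * ((∫ u in Set.Ioi (1:ℝ), u ^ (-s - 1) *
        ∫ t in (1:ℝ)..u, (∑ i ∈ Finset.Icc 1 ⌊t⌋₊,
          (ArithmeticFunction.moebius i : ℝ) / i) / t : ℝ) : ℂ) =
      1 / ((s : ℂ) * riemannZeta ((s : ℂ) + 1)) := by
  rw [integral_Ioi_rpow_mul_integral_sum_floor_div (by simp) hs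
    (summable_abs_moebius_div_mul_rpow_neg hs), Complex.ofReal_div,
    ofReal_tsum_moebius_div_mul_rpow_neg hs]
  have : (s : ℂ) ≠ 0 := by exact_mod_cast hs.ne'
  push_cast
  field_simp
end

section
/- Fix an integer T ≥ 2 and define μ_T(n) = μ(n) for 1 ≤ n < T, μ_T(T) = −T · Σ_{j < T} μ(j)/j, and μ_T(n) = 0 for n > T. Let m_T = 1 ∗ μ_T (Dirichlet convolution with the constant function 1) and M_T(x) = Σ_{n ≤ x} m_T(n). Then for every real x ≥ T², Σ_{n ≤ x} (Λ ∗ m_T)(n) = Σ_{j ≤ T−1} ψ(x/j) · m_T(j) + Σ_{i ≤ x/(T−1)} M_T(x/i) · Λ(i) − M_T(T−1) · ψ(x/(T−1)). -/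
/-- Diamond–Erdős truncated Möbius function `μ_T`. -/
noncomputable def muT (T : ℕ) (n : ℕ) : ℝ :=
  if n < T then (ArithmeticFunction.moebius n : ℝ)
  else if n = T then -(T : ℝ) * ∑ j ∈ Finset.Ico 1 T, (ArithmeticFunction.moebius j : ℝ) / j
  else 0

/-- `m_T = 1 ∗ μ_T`, the Dirichlet convolution of the constant function `1` with `μ_T`. -/
noncomputable def mT (T : ℕ) (n : ℕ) : ℝ := ∑ d ∈ n.divisors, muT T d

/-- `M_T x = ∑_{n ≤ x} m_T(n)`. -/
noncomputable def MT (T : ℕ) (x : ℝ) : ℝ := ∑ n ∈ Finset.Icc 1 ⌊x⌋₊, mT T n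

/-!
Dirichlet's hyperbola method. With `N = ⌊x⌋` and `K = T - 1`, the left side is the sum of
`Λ(i) m_T(j)` over the lattice points `i j ≤ N`. Each such point has `j ≤ K` or `i ≤ N / K`;
summing over the first region with `j` outermost and over the second with `i` outermost gives
the two sums on the right, and the rectangle `i ≤ N / K`, `j ≤ K` where they
overlap contributes `M_T(K) ψ(N / K)`.
-/

open Finset ArithmeticFunction

namespace Finset

theorem sum_eq_sum_filter_add_sum_filter_sub_of_forall_or {α β : Type*} [AddCommGroup β]
    {s : Finset α} {p q : α → Prop} [DecidablePred p] [DecidablePred q]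
    (h : ∀ x ∈ s, p x ∨ q x) (f : α → β) :
    ∑ x ∈ s, f x = ∑ x ∈ s with p x, f x + ∑ x ∈ s with q x, f x - ∑ x ∈ s with p x ∧ q x, f x := by
  classical
  rw [eq_sub_iff_add_eq, filter_and, ← sum_union_inter (s₁ := s.filter p), ← filter_or,
    filter_true_of_mem h]

end Finset

def hyperbolaRegion (N : ℕ) : Finset (ℕ × ℕ) := {x ∈ Ioc 0 N ×ˢ Ioc 0 N | x.1 * x.2 ≤ N}

lemma mem_hyperbolaRegion {N a b : ℕ} : (a, b) ∈ hyperbolaRegion N ↔ 0 < a ∧ 0 < b ∧ a * b ≤ N := by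
  simp only [hyperbolaRegion, mem_filter, mem_product, mem_Ioc]
  constructor
  · grind
  · rintro ⟨ha, hb, hab⟩
    exact ⟨⟨⟨ha, (Nat.le_mul_of_pos_right _ hb).trans hab⟩, hb,
      (Nat.le_mul_of_pos_left _ ha).trans hab⟩, hab⟩

lemma snd_le_or_fst_le_div_of_mem_hyperbolaRegion {N K : ℕ} (hK : 0 < K) {x : ℕ × ℕ}
    (hx : x ∈ hyperbolaRegion N) : x.2 ≤ K ∨ x.1 ≤ N / K := by
  obtain ⟨a, b⟩ := x
  rw [mem_hyperbolaRegion] at hx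
  rw [or_iff_not_imp_left, not_le, Nat.le_div_iff_mul_le hK]
  exact fun hKb => (Nat.mul_le_mul_left a hKb.le).trans hx.2.2

namespace ArithmeticFunction

variable {R : Type*} [CommRing R]

theorem sum_Icc_mul_eq_hyperbola (f g : ArithmeticFunction R) {N K : ℕ} (hK : 0 < K) :
    ∑ n ∈ Icc 1 N, (f * g) n =
      ∑ j ∈ Icc 1 K, (∑ i ∈ Icc 1 (N / j), f i) * g j +
        ∑ i ∈ Icc 1 (N / K), (∑ j ∈ Icc 1 (N / i), g j) * f i -
        (∑ j ∈ Icc 1 K, g j) * ∑ i ∈ Icc 1 (N / K), f i := by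
  rw [show Icc 1 N = Ioc 0 N from Icc_add_one_left_eq_Ioc 0 N, sum_Ioc_mul_eq_sum_prod_filter]
  change ∑ x ∈ hyperbolaRegion N, f x.1 * g x.2 = _
  have hleft : ∑ x ∈ hyperbolaRegion N with x.2 ≤ K, f x.1 * g x.2 =
      ∑ j ∈ Icc 1 K, (∑ i ∈ Icc 1 (N / j), f i) * g j := by
    simp_rw [sum_mul]
    refine sum_finset_product_right' (f := fun i j => f i * g j) _ _ _ fun ⟨a, b⟩ => ?_
    simp only [mem_filter, mem_hyperbolaRegion, mem_Icc]
    constructor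
    · rintro ⟨⟨ha, hb, hab⟩, hbK⟩
      exact ⟨⟨hb, hbK⟩, ha, (Nat.le_div_iff_mul_le hb).2 hab⟩
    · rintro ⟨⟨hb, hbK⟩, ha, hab⟩
      exact ⟨⟨ha, hb, (Nat.le_div_iff_mul_le hb).1 hab⟩, hbK⟩
  have hright : ∑ x ∈ hyperbolaRegion N with x.1 ≤ N / K, f x.1 * g x.2 =
      ∑ i ∈ Icc 1 (N / K), (∑ j ∈ Icc 1 (N / i), g j) * f i := by
    simp_rw [sum_mul, mul_comm (g _)]
    refine sum_finset_product' (f := fun i j => f i * g j) _ _ _ fun ⟨a, b⟩ => ?_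
    simp only [mem_filter, mem_hyperbolaRegion, mem_Icc]
    constructor
    · rintro ⟨⟨ha, hb, hab⟩, haK⟩
      exact ⟨⟨ha, haK⟩, hb, (Nat.le_div_iff_mul_le ha).2 (by rwa [mul_comm])⟩
    · rintro ⟨⟨ha, haK⟩, hb, hab⟩
      exact ⟨⟨ha, hb, mul_comm a b ▸ (Nat.le_div_iff_mul_le ha).1 hab⟩, haK⟩
  have hrect : ∑ x ∈ hyperbolaRegion N with x.2 ≤ K ∧ x.1 ≤ N / K, f x.1 * g x.2 =
      (∑ j ∈ Icc 1 K, g j) * ∑ i ∈ Icc 1 (N / K), f i := by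
    rw [mul_comm, sum_mul_sum, ← sum_product']
    refine sum_congr (Finset.ext fun ⟨a, b⟩ => ?_) fun _ _ => rfl
    simp only [mem_filter, mem_hyperbolaRegion, mem_product, mem_Icc]
    constructor
    · rintro ⟨⟨ha, hb, -⟩, hbK, haK⟩
      exact ⟨⟨ha, haK⟩, hb, hbK⟩
    · rintro ⟨⟨ha, haK⟩, hb, hbK⟩
      exact ⟨⟨ha, hb, (Nat.mul_le_mul haK hbK).trans (Nat.div_mul_le_self N K)⟩, hbK, haK⟩
  rw [sum_eq_sum_filter_add_sum_filter_sub_of_forall_or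
    (fun _ => snd_le_or_fst_le_div_of_mem_hyperbolaRegion hK), hleft, hright, hrect]

end ArithmeticFunction

lemma psi_div_natCast (x : ℝ) (j : ℕ) : psi (x / j) = ∑ i ∈ Icc 1 (⌊x⌋₊ / j), Λ i := by
  rw [psi, Nat.floor_div_natCast]

lemma MT_div_natCast (T : ℕ) (x : ℝ) (j : ℕ) :
    MT T (x / j) = ∑ i ∈ Icc 1 (⌊x⌋₊ / j), mT T i := by
  rw [MT, Nat.floor_div_natCast]

lemma MT_natCast (T k : ℕ) : MT T k = ∑ i ∈ Icc 1 k, mT T i := by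
  rw [MT, Nat.floor_natCast]

noncomputable def mTArith (T : ℕ) : ArithmeticFunction ℝ := ⟨mT T, by simp [mT]⟩

theorem stmt_17_general (T : ℕ) (hT : 2 ≤ T) (x : ℝ) :
    (∑ n ∈ Finset.Icc 1 ⌊x⌋₊, ∑ p ∈ n.divisorsAntidiagonal,
        ArithmeticFunction.vonMangoldt p.1 * mT T p.2) =
      (∑ j ∈ Finset.Icc 1 (T - 1), psi (x / j) * mT T j) +
        (∑ i ∈ Finset.Icc 1 ⌊x / ((T : ℝ) - 1)⌋₊, MT T (x / i) * ArithmeticFunction.vonMangoldt i) -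
        MT T ((T : ℝ) - 1) * psi (x / ((T : ℝ) - 1)) := by
  have hK : ((T - 1 : ℕ) : ℝ) = (T : ℝ) - 1 := Nat.cast_pred (by omega)
  rw [← hK, Nat.floor_div_natCast, MT_natCast]
  simp only [psi_div_natCast, MT_div_natCast]
  -- `(Λ * mTArith T) n` unfolds definitionally to the inner sum on the left.
  exact sum_Icc_mul_eq_hyperbola Λ (mTArith T) (by omega)

theorem stmt_17 (T : ℕ) (hT : 2 ≤ T) (x : ℝ) (hx : (T : ℝ) ^ 2 ≤ x) :
    (∑ n ∈ Finset.Icc 1 ⌊x⌋₊, ∑ p ∈ n.divisorsAntidiagonal,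
        ArithmeticFunction.vonMangoldt p.1 * mT T p.2) =
      (∑ j ∈ Finset.Icc 1 (T - 1), psi (x / j) * mT T j) +
        (∑ i ∈ Finset.Icc 1 ⌊x / ((T : ℝ) - 1)⌋₊, MT T (x / i) * ArithmeticFunction.vonMangoldt i) -
        MT T ((T : ℝ) - 1) * psi (x / ((T : ℝ) - 1)) :=
  stmt_17_general T hT x
end
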